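/- arXiv:1907.03155 — 2 statements merged into one kernel-verified Lean document; each statement's English description precedes it below -/
import Mathlib

section
/- Let y ≥ 0 be a natural number, α ∈ [0,1], and λ_1, …, λ_h > 0 real numbers. Define the h-step DP-INAR transition distribution on the natural numbers as the result of starting from the point mass at y and applying, for i = 1, …, h in order, the one-step transition that sends a count n to (α ∘ n) + Z_i, where α ∘ n is a Binomial(n, α) random variable (binomial thinning) and Z_i is an independent Poisson(λ_i) innovation. Then this h-step distribution equals the convolution of a Binomial(y, α^h) distribution and a Poisson(μ_h) distribution, where μ_h = Σ_{i=1}^h α^{h−i} λ_i; explicitly, its probability mass at k is Σ_{m=0}^{min(y,k)} C(y,m) (α^h)^m (1−α^h)^{y−m} e^{−μ_h} μ_h^{k−m}/(k−m)!. -/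
/-!
Binomial thinning and adding an independent Poisson innovation both preserve the family of laws
`Bin(y, p) ∗ Poi(μ)`. Thinning distributes over convolution (Vandermonde's identity), and thins
`Bin(y, p)` to `Bin(y, pα)` and `Poi(μ)` to `Poi(αμ)`; the new innovation then adds `λ` to the
Poisson parameter. Starting from the point mass `Bin(y, 1) ∗ Poi(0)`, induction on `h` gives the
parameters `α ^ h` and `μ_h = α μ_{h-1} + λ_h`. The convolution identities are read off the
generating functions `(αX + 1 - α) ^ n` of `Bin(n, α)` and `e^{-μ} e^{μX}` of `Poi(μ)`.
-/

open scoped BigOperators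

/-- Probability mass function of a Binomial(n, α) distribution at m. -/
noncomputable def binomPMF (n : ℕ) (α : ℝ) (m : ℕ) : ℝ :=
  (n.choose m : ℝ) * α ^ m * (1 - α) ^ (n - m)

/-- Probability mass function of a Poisson(lam) distribution at k. -/
noncomputable def poissonPMF (lam : ℝ) (k : ℕ) : ℝ :=
  Real.exp (-lam) * lam ^ k / (Nat.factorial k : ℝ)

/-- One-step generalized INAR(1) transition: from count n, go to (α ∘ n) + Z,
with α ∘ n a Binomial(n, α) (binomial thinning) and Z an independent
Poisson(lam) innovation. -/
noncomputable def stepPMF (α lam : ℝ) (n k : ℕ) : ℝ :=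
  ∑ m ∈ Finset.range (min n k + 1), binomPMF n α m * poissonPMF lam (k - m)

/-- The h-step DP-INAR transition distribution started at the point mass at y:
apply, for i = 1, …, h in order, the one-step transition with innovation
rate `lam i`. -/
noncomputable def hStepPMF (α : ℝ) (lam : ℕ → ℝ) (y : ℕ) : ℕ → ℕ → ℝ
  | 0, k => if k = y then 1 else 0
  | i + 1, k => ∑' n : ℕ, hStepPMF α lam y i n * stepPMF α (lam (i + 1)) n k

open Finset

noncomputable def convolve (f g : ℕ → ℝ) (k : ℕ) : ℝ :=
  ∑ p ∈ antidiagonal k, f p.1 * g p.2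

lemma mk_convolve (f g : ℕ → ℝ) :
    PowerSeries.mk (convolve f g) = PowerSeries.mk f * PowerSeries.mk g := by
  ext n
  simp [convolve, PowerSeries.coeff_mul]

lemma convolve_eq_of_mk_mul_mk {f g F : ℕ → ℝ}
    (h : PowerSeries.mk f * PowerSeries.mk g = PowerSeries.mk F) : convolve f g = F := by
  funext k
  simpa using congrArg (PowerSeries.coeff k) ((mk_convolve f g).trans h)

lemma convolve_assoc (f g h : ℕ → ℝ) : convolve (convolve f g) h = convolve f (convolve g h) :=
  convolve_eq_of_mk_mul_mk (by rw [mk_convolve, mk_convolve, mk_convolve, mul_assoc])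

lemma HasSum.convolve {u v : ℕ → ℝ} {a b : ℝ} (hu : HasSum u a) (hv : HasSum v b) :
    HasSum (convolve u v) (a * b) := by
  have hu' : Summable fun n => ‖u n‖ := summable_norm_iff.mpr hu.summable
  have hv' : Summable fun n => ‖v n‖ := summable_norm_iff.mpr hv.summable
  rw [← hu.tsum_eq, ← hv.tsum_eq, tsum_mul_tsum_eq_tsum_sum_antidiagonal_of_summable_norm hu' hv']
  exact (summable_norm_sum_mul_antidiagonal_of_summable_norm hu' hv').of_norm.hasSum

lemma binomPMF_eq_zero_of_lt {n m : ℕ} (α : ℝ) (h : n < m) : binomPMF n α m = 0 := by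
  simp [binomPMF, Nat.choose_eq_zero_of_lt h]

lemma binomPMF_one (n m : ℕ) : binomPMF n 1 m = if m = n then 1 else 0 := by
  rcases lt_trichotomy m n with hlt | rfl | hgt
  · simp [binomPMF, hlt.ne, Nat.sub_ne_zero_of_lt hlt]
  · simp [binomPMF]
  · simp [binomPMF_eq_zero_of_lt 1 hgt, hgt.ne']

lemma convolve_binomPMF_apply (n : ℕ) (α : ℝ) (g : ℕ → ℝ) (k : ℕ) :
    convolve (binomPMF n α) g k = ∑ m ∈ range (min n k + 1), binomPMF n α m * g (k - m) := by
  rw [convolve, Nat.sum_antidiagonal_eq_sum_range_succ_mk]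
  refine (sum_subset (range_subset_range.mpr (by omega)) fun m hmk hmn => ?_).symm
  rw [mem_range] at hmk hmn
  rw [binomPMF_eq_zero_of_lt α (by omega), zero_mul]

lemma mk_binomPMF (n : ℕ) (α : ℝ) :
    PowerSeries.mk (binomPMF n α) =
      (PowerSeries.C α * PowerSeries.X + PowerSeries.C (1 - α)) ^ n := by
  have hterm : ∀ j, (PowerSeries.C α * PowerSeries.X) ^ j * PowerSeries.C (1 - α) ^ (n - j) *
      (n.choose j : PowerSeries ℝ) =
        PowerSeries.C (n.choose j * α ^ j * (1 - α) ^ (n - j)) * PowerSeries.X ^ j := by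
    intro j
    simp only [map_mul, map_pow, map_natCast]
    ring
  ext m
  simp only [add_pow, map_sum, hterm, PowerSeries.coeff_C_mul_X_pow, sum_ite_eq, mem_range,
    PowerSeries.coeff_mk]
  split_ifs with hm
  · rfl
  · exact binomPMF_eq_zero_of_lt α (by omega)

lemma convolve_binomPMF_binomPMF (i j : ℕ) (α : ℝ) :
    convolve (binomPMF i α) (binomPMF j α) = binomPMF (i + j) α :=
  convolve_eq_of_mk_mul_mk (by rw [mk_binomPMF, mk_binomPMF, mk_binomPMF, pow_add])

lemma binomPMF_add_mul_binomPMF (y c t : ℕ) (p α : ℝ) :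
    binomPMF y p (c + t) * binomPMF (c + t) α c =
      y.choose c * (p * α) ^ c *
        ((y - c).choose t * (p * (1 - α)) ^ t * (1 - p) ^ (y - c - t)) := by
  have hchoose : (y.choose (c + t) : ℝ) * (c + t).choose c = y.choose c * (y - c).choose t := by
    have := Nat.choose_mul (n := y) (Nat.le_add_right c t)
    rw [Nat.add_sub_cancel_left] at this
    exact_mod_cast this
  simp only [binomPMF, Nat.add_sub_cancel_left, Nat.sub_sub, mul_pow, pow_add]
  linear_combination (p ^ c * p ^ t * α ^ c * (1 - α) ^ t * (1 - p) ^ (y - (c + t))) * hchoose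

lemma hasSum_binomPMF_mul_binomPMF (y : ℕ) (p α : ℝ) (c : ℕ) :
    HasSum (fun j => binomPMF y p j * binomPMF j α c) (binomPMF y (p * α) c) := by
  have hlow : ∑ j ∈ range c, binomPMF y p j * binomPMF j α c = 0 :=
    sum_eq_zero fun j hj => by rw [binomPMF_eq_zero_of_lt α (mem_range.mp hj), mul_zero]
  have hbinom : binomPMF y (p * α) c = y.choose c * (p * α) ^ c *
      ∑ t ∈ range (y - c + 1), (y - c).choose t * (p * (1 - α)) ^ t * (1 - p) ^ (y - c - t) := by
    rw [binomPMF, show 1 - p * α = p * (1 - α) + (1 - p) by ring, add_pow]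
    simp only [mul_comm, mul_left_comm]
  rw [← hasSum_nat_add_iff' c, hlow, sub_zero, hbinom]
  simp only [add_comm _ c, binomPMF_add_mul_binomPMF]
  refine (hasSum_sum_of_ne_finset_zero fun t ht => ?_).mul_left _
  rw [Nat.choose_eq_zero_of_lt (by simpa using ht)]
  simp

lemma mk_poissonPMF (μ : ℝ) :
    PowerSeries.mk (poissonPMF μ) =
      PowerSeries.C (Real.exp (-μ)) * PowerSeries.rescale μ (PowerSeries.exp ℝ) := by
  ext k
  simp [poissonPMF, PowerSeries.coeff_exp, PowerSeries.coeff_rescale, div_eq_mul_inv, mul_assoc]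

lemma convolve_poissonPMF_poissonPMF (a b : ℝ) :
    convolve (poissonPMF a) (poissonPMF b) = poissonPMF (a + b) :=
  convolve_eq_of_mk_mul_mk (by
    rw [mk_poissonPMF, mk_poissonPMF, mk_poissonPMF, ← PowerSeries.exp_mul_exp_eq_exp_add,
      neg_add, Real.exp_add, map_mul]
    ring)

lemma convolve_poissonPMF_zero (f : ℕ → ℝ) : convolve f (poissonPMF 0) = f :=
  convolve_eq_of_mk_mul_mk (by simp [mk_poissonPMF, PowerSeries.rescale_zero])

lemma hasSum_poissonPMF (μ : ℝ) : HasSum (poissonPMF μ) 1 := by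
  have := (NormedSpace.expSeries_div_hasSum_exp μ).mul_left (Real.exp (-μ))
  rw [← Real.exp_eq_exp_ℝ, ← Real.exp_add, neg_add_cancel, Real.exp_zero] at this
  have hterm : poissonPMF μ = fun k => Real.exp (-μ) * (μ ^ k / k.factorial) :=
    funext fun k => mul_div_assoc _ _ _
  rwa [hterm]

lemma poissonPMF_add_mul_binomPMF (μ α : ℝ) (d t : ℕ) :
    poissonPMF μ (d + t) * binomPMF (d + t) α d =
      poissonPMF (α * μ) d * poissonPMF ((1 - α) * μ) t := by
  have hfac : ((d + t).choose d : ℝ) * d.factorial * t.factorial = (d + t).factorial := by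
    have := Nat.choose_mul_factorial_mul_factorial (Nat.le_add_right d t)
    rw [Nat.add_sub_cancel_left] at this
    exact_mod_cast this
  have hchoose : ((d + t).choose d : ℝ) ≠ 0 :=
    Nat.cast_ne_zero.mpr (Nat.choose_pos (Nat.le_add_right d t)).ne'
  have hexp : Real.exp (-μ) = Real.exp (-(α * μ)) * Real.exp (-((1 - α) * μ)) := by
    rw [← Real.exp_add]; ring_nf
  rw [poissonPMF, binomPMF, Nat.add_sub_cancel_left, ← hfac, hexp, poissonPMF, poissonPMF,
    mul_pow, mul_pow, pow_add]
  field_simp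

lemma hasSum_poissonPMF_mul_binomPMF (μ α : ℝ) (d : ℕ) :
    HasSum (fun s => poissonPMF μ s * binomPMF s α d) (poissonPMF (α * μ) d) := by
  have hlow : ∑ s ∈ range d, poissonPMF μ s * binomPMF s α d = 0 :=
    sum_eq_zero fun s hs => by rw [binomPMF_eq_zero_of_lt α (mem_range.mp hs), mul_zero]
  rw [← hasSum_nat_add_iff' d, hlow, sub_zero]
  simp only [add_comm _ d, poissonPMF_add_mul_binomPMF]
  simpa using (hasSum_poissonPMF ((1 - α) * μ)).mul_left (poissonPMF (α * μ) d)

lemma hasSum_convolve_mul_binomPMF {f g F G : ℕ → ℝ} {α : ℝ}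
    (hf : ∀ a, HasSum (fun n => f n * binomPMF n α a) (F a))
    (hg : ∀ b, HasSum (fun n => g n * binomPMF n α b) (G b)) (c : ℕ) :
    HasSum (fun n => convolve f g n * binomPMF n α c) (convolve F G c) := by
  have hsplit : (fun n => convolve f g n * binomPMF n α c) = fun n => ∑ q ∈ antidiagonal c,
      convolve (fun i => f i * binomPMF i α q.1) (fun j => g j * binomPMF j α q.2) n := by
    funext n
    simp only [convolve, sum_mul]
    rw [sum_comm]
    refine sum_congr rfl fun p hp => ?_
    rw [← mem_antidiagonal.mp hp, ← convolve_binomPMF_binomPMF, convolve, mul_sum]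
    exact sum_congr rfl fun q _ => by ring
  rw [hsplit]
  exact hasSum_sum fun q _ => (hf q.1).convolve (hg q.2)

lemma stepPMF_eq_convolve (α lam : ℝ) (n : ℕ) :
    stepPMF α lam n = convolve (binomPMF n α) (poissonPMF lam) :=
  funext fun k => (convolve_binomPMF_apply n α _ k).symm

lemma hasSum_mul_stepPMF {f F : ℕ → ℝ} {α : ℝ} (lam : ℝ)
    (hf : ∀ a, HasSum (fun n => f n * binomPMF n α a) (F a)) (k : ℕ) :
    HasSum (fun n => f n * stepPMF α lam n k) (convolve F (poissonPMF lam) k) := by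
  simp only [stepPMF_eq_convolve, convolve, mul_sum, ← mul_assoc]
  exact hasSum_sum fun q _ => (hf q.1).mul_right _

noncomputable def innovationMean (α : ℝ) (lam : ℕ → ℝ) (h : ℕ) : ℝ :=
  ∑ i ∈ Icc 1 h, α ^ (h - i) * lam i

lemma innovationMean_zero (α : ℝ) (lam : ℕ → ℝ) : innovationMean α lam 0 = 0 := by
  simp [innovationMean]

lemma innovationMean_succ (α : ℝ) (lam : ℕ → ℝ) (h : ℕ) :
    innovationMean α lam (h + 1) = α * innovationMean α lam h + lam (h + 1) := by
  rw [innovationMean, innovationMean, sum_Icc_succ_top (by omega), Nat.sub_self, pow_zero, one_mul,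
    mul_sum]
  congr 1
  refine sum_congr rfl fun i hi => ?_
  rw [Nat.sub_add_comm (mem_Icc.mp hi).2, pow_succ]
  ring

theorem hStepPMF_eq_convolve (α : ℝ) (lam : ℕ → ℝ) (y h : ℕ) :
    hStepPMF α lam y h = convolve (binomPMF y (α ^ h)) (poissonPMF (innovationMean α lam h)) := by
  induction h with
  | zero =>
    rw [pow_zero, innovationMean_zero, convolve_poissonPMF_zero]
    funext k
    rw [binomPMF_one]
    rfl
  | succ h ih =>
    have hthin := hasSum_convolve_mul_binomPMF (hasSum_binomPMF_mul_binomPMF y (α ^ h) α)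
      (hasSum_poissonPMF_mul_binomPMF (innovationMean α lam h) α)
    funext k
    rw [hStepPMF, ih, (hasSum_mul_stepPMF _ hthin k).tsum_eq, convolve_assoc,
      convolve_poissonPMF_poissonPMF, ← pow_succ, innovationMean_succ]

theorem hStepPMF_eq_binomial_poisson_convolution_general
    (y : ℕ) (α : ℝ)
    (h : ℕ) (lam : ℕ → ℝ)
    (k : ℕ) :
    hStepPMF α lam y h k =
      ∑ m ∈ Finset.range (min y k + 1),
        (y.choose m : ℝ) * (α ^ h) ^ m * (1 - α ^ h) ^ (y - m) *
          (Real.exp (-(∑ i ∈ Finset.Icc 1 h, α ^ (h - i) * lam i)) *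
            (∑ i ∈ Finset.Icc 1 h, α ^ (h - i) * lam i) ^ (k - m) /
              (Nat.factorial (k - m) : ℝ)) := by
  rw [hStepPMF_eq_convolve, convolve_binomPMF_apply]
  rfl

/-- The h-step DP-INAR transition distribution from y equals the convolution of a
Binomial(y, α^h) and a Poisson(μ_h) distribution, μ_h = ∑_{i=1}^h α^{h-i} λ_i. -/
theorem hStepPMF_eq_binomial_poisson_convolution
    (y : ℕ) (α : ℝ) (hα : α ∈ Set.Icc (0 : ℝ) 1)
    (h : ℕ) (hh : 1 ≤ h) (lam : ℕ → ℝ)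
    (hlam : ∀ i, 1 ≤ i → i ≤ h → 0 < lam i) (k : ℕ) :
    hStepPMF α lam y h k =
      ∑ m ∈ Finset.range (min y k + 1),
        (y.choose m : ℝ) * (α ^ h) ^ m * (1 - α ^ h) ^ (y - m) *
          (Real.exp (-(∑ i ∈ Finset.Icc 1 h, α ^ (h - i) * lam i)) *
            (∑ i ∈ Finset.Icc 1 h, α ^ (h - i) * lam i) ^ (k - m) /
              (Nat.factorial (k - m) : ℝ)) :=
  hStepPMF_eq_binomial_poisson_convolution_general y α h lam k
end

section
/- One-step update of the h-step law (induction step of Proposition 1): let α ∈ [0,1], y a natural number, μ > 0, λ > 0, and h ≥ 1. If X is distributed as the convolution of Binomial(y, α^h) and Poisson(μ), and Y = (α ∘ X) + Z where, given X, α ∘ X is Binomial(X, α) and Z is an independent Poisson(λ) random variable, then Y is distributed as the convolution of Binomial(y, α^{h+1}) and Poisson(αμ + λ). -/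
open scoped BigOperators

/-- Mass function at k of the convolution of Binomial(y, p) and Poisson(μ). -/
noncomputable def convBinPoisPMF (y : ℕ) (p μ : ℝ) (k : ℕ) : ℝ :=
  ∑ m ∈ Finset.range (min y k + 1), binomPMF y p m * poissonPMF μ (k - m)

/-!
The law of `Y` is the binomial thinning of the law of `X`, convolved with Poisson(λ).
Thinning commutes with convolution: by Vandermonde, `Bin(i + j, α) = Bin(i, α) * Bin(j, α)`,
and the Cauchy product rearranges the resulting double series. Both factors of the law of `X`
are stable under thinning, `Bin(y, p) ↦ Bin(y, pα)` (write `Bin(y, p)` as a convolution of `y`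
Bernoulli laws) and `Poi(μ) ↦ Poi(αμ)`, and Poisson laws convolve by adding their means.
The finite convolution identities are products of generating functions in `ℝ⟦X⟧`.
-/

open Finset PowerSeries Nat

namespace BinomialThinning

def conv (f g : ℕ → ℝ) (n : ℕ) : ℝ :=
  ∑ x ∈ antidiagonal n, f x.1 * g x.2

noncomputable def thin (α : ℝ) (f : ℕ → ℝ) (m : ℕ) : ℝ :=
  ∑' n, f n * binomPMF n α m

lemma mk_injective : Function.Injective (mk : (ℕ → ℝ) → PowerSeries ℝ) :=
  fun f g h => funext fun n => by simpa using congrArg (coeff n) h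

lemma mk_conv (f g : ℕ → ℝ) : mk (conv f g) = mk f * mk g := by
  ext n
  simp [conv, coeff_mul]

lemma conv_eq_iff {f g h : ℕ → ℝ} : conv f g = h ↔ mk f * mk g = mk h := by
  rw [← mk_conv, mk_injective.eq_iff]

lemma conv_assoc (f g h : ℕ → ℝ) : conv (conv f g) h = conv f (conv g h) := by
  rw [conv_eq_iff, mk_conv, mk_conv, mk_conv, mul_assoc]

lemma binomPMF_eq_zero_of_lt {n m : ℕ} (p : ℝ) (h : n < m) : binomPMF n p m = 0 := by
  simp [binomPMF, Nat.choose_eq_zero_of_lt h]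

lemma sum_range_min_eq_conv {f : ℕ → ℝ} {y : ℕ} (hf : ∀ m, y < m → f m = 0) (g : ℕ → ℝ)
    (k : ℕ) : ∑ m ∈ range (min y k + 1), f m * g (k - m) = conv f g k := by
  rw [conv, Nat.sum_antidiagonal_eq_sum_range_succ_mk]
  refine sum_subset (range_subset_range.2 (by omega)) fun m hk hy => ?_
  simp only [mem_range] at hk hy
  rw [hf m (by omega), zero_mul]

lemma convBinPoisPMF_eq_conv (y : ℕ) (p μ : ℝ) :
    convBinPoisPMF y p μ = conv (binomPMF y p) (poissonPMF μ) :=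
  funext (sum_range_min_eq_conv (fun _ => binomPMF_eq_zero_of_lt p) _)

lemma stepPMF_eq_conv (α lam : ℝ) (n : ℕ) :
    stepPMF α lam n = conv (binomPMF n α) (poissonPMF lam) :=
  convBinPoisPMF_eq_conv n α lam

lemma mk_binomPMF (n : ℕ) (p : ℝ) :
    mk (binomPMF n p) = rescale p ((Polynomial.X + Polynomial.C (1 - p)) ^ n : Polynomial ℝ) := by
  ext m
  rw [coeff_rescale, Polynomial.coeff_coe, Polynomial.coeff_X_add_C_pow, coeff_mk, binomPMF]
  ring

lemma binomPMF_add (a b : ℕ) (p : ℝ) :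
    binomPMF (a + b) p = conv (binomPMF a p) (binomPMF b p) := by
  rw [eq_comm, conv_eq_iff, mk_binomPMF, mk_binomPMF, mk_binomPMF, pow_add, Polynomial.coe_mul,
    map_mul]

lemma mk_poissonPMF (μ : ℝ) : mk (poissonPMF μ) = C (Real.exp (-μ)) * rescale μ (exp ℝ) := by
  ext n
  simp [coeff_rescale, coeff_exp, poissonPMF]
  ring

lemma poissonPMF_conv (A B : ℝ) :
    conv (poissonPMF A) (poissonPMF B) = poissonPMF (A + B) := by
  rw [conv_eq_iff, mk_poissonPMF, mk_poissonPMF, mk_poissonPMF, ← exp_mul_exp_eq_exp_add,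
    neg_add, Real.exp_add, map_mul]
  ring

lemma conv_mul_binomPMF (f g : ℕ → ℝ) (α : ℝ) (n m : ℕ) :
    conv f g n * binomPMF n α m = ∑ x ∈ antidiagonal m,
      conv (fun i => f i * binomPMF i α x.1) (fun j => g j * binomPMF j α x.2) n := by
  calc conv f g n * binomPMF n α m
      = ∑ ij ∈ antidiagonal n, ∑ x ∈ antidiagonal m,
          f ij.1 * binomPMF ij.1 α x.1 * (g ij.2 * binomPMF ij.2 α x.2) := by
        rw [conv, sum_mul]
        refine sum_congr rfl fun ij hij => ?_
        rw [← mem_antidiagonal.1 hij, binomPMF_add, conv, mul_sum]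
        exact sum_congr rfl fun _ _ => by ring
    _ = _ := sum_comm

section Thinning

variable {f g : ℕ → ℝ} {α : ℝ}

lemma summable_conv_mul_binomPMF (hf : ∀ a, Summable fun i => ‖f i * binomPMF i α a‖)
    (hg : ∀ b, Summable fun j => ‖g j * binomPMF j α b‖) (m : ℕ) :
    Summable fun n => conv f g n * binomPMF n α m := by
  simp_rw [conv_mul_binomPMF]
  exact summable_sum fun x _ =>
    (summable_norm_sum_mul_antidiagonal_of_summable_norm (hf x.1) (hg x.2)).of_norm

lemma thin_conv (hf : ∀ a, Summable fun i => ‖f i * binomPMF i α a‖)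
    (hg : ∀ b, Summable fun j => ‖g j * binomPMF j α b‖) :
    thin α (conv f g) = conv (thin α f) (thin α g) := by
  funext m
  rw [thin]
  simp_rw [conv_mul_binomPMF]
  have hsum : ∀ x ∈ antidiagonal m, Summable fun n =>
      conv (fun i => f i * binomPMF i α x.1) (fun j => g j * binomPMF j α x.2) n := fun x _ =>
    (summable_norm_sum_mul_antidiagonal_of_summable_norm (hf x.1) (hg x.2)).of_norm
  rw [Summable.tsum_finsetSum hsum, conv]
  refine sum_congr rfl fun x _ => ?_
  rw [thin, thin, tsum_mul_tsum_eq_tsum_sum_antidiagonal_of_summable_norm (hf x.1) (hg x.2)]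
  rfl

lemma tsum_mul_conv_binomPMF (hf : ∀ a, Summable fun n => f n * binomPMF n α a) (k : ℕ) :
    ∑' n, f n * conv (binomPMF n α) g k = conv (thin α f) g k := by
  simp_rw [conv, mul_sum]
  rw [Summable.tsum_finsetSum fun x _ => ((hf x.1).mul_right (g x.2)).congr fun n => by ring]
  refine sum_congr rfl fun x _ => ?_
  rw [thin, ← tsum_mul_right]
  exact tsum_congr fun n => by ring

end Thinning

lemma summable_norm_binomPMF_mul_binomPMF (y : ℕ) (p α : ℝ) (a : ℕ) :
    Summable fun i => ‖binomPMF y p i * binomPMF i α a‖ := by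
  refine summable_of_ne_finset_zero (s := range (y + 1)) fun i hi => ?_
  rw [mem_range, not_lt] at hi
  rw [binomPMF_eq_zero_of_lt p (by omega), zero_mul, norm_zero]

lemma thin_binomPMF_one (p α : ℝ) : thin α (binomPMF 1 p) = binomPMF 1 (p * α) := by
  funext m
  rw [thin, tsum_eq_sum (s := range 2) fun n hn => by
    rw [binomPMF_eq_zero_of_lt p (by simpa using hn), zero_mul]]
  rcases m with _ | _ | m
  · simp [binomPMF, sum_range_succ]
    ring
  · simp [binomPMF, sum_range_succ]
  · simp [binomPMF, sum_range_succ, Nat.choose_eq_zero_of_lt]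

lemma thin_binomPMF (y : ℕ) (p α : ℝ) : thin α (binomPMF y p) = binomPMF y (p * α) := by
  induction y with
  | zero =>
    funext m
    rw [thin, tsum_eq_single 0 fun n hn => by
      rw [binomPMF_eq_zero_of_lt p (Nat.pos_of_ne_zero hn), zero_mul]]
    rcases m with _ | m <;> simp [binomPMF]
  | succ y ih =>
    rw [binomPMF_add, thin_conv (summable_norm_binomPMF_mul_binomPMF y p α)
      (summable_norm_binomPMF_mul_binomPMF 1 p α), ih, thin_binomPMF_one, binomPMF_add]

lemma hasSum_poissonPMF (μ : ℝ) : HasSum (poissonPMF μ) 1 := by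
  have := (NormedSpace.expSeries_div_hasSum_exp μ).mul_left (Real.exp (-μ))
  rw [← Real.exp_eq_exp_ℝ, ← Real.exp_add, neg_add_cancel, Real.exp_zero] at this
  exact this.congr_fun fun n => by rw [poissonPMF, mul_div_assoc]

lemma summable_norm_poissonPMF (μ : ℝ) : Summable fun n => ‖poissonPMF μ n‖ := by
  refine ((Real.summable_pow_div_factorial |μ|).mul_left ‖Real.exp (-μ)‖).congr fun n => ?_
  simp [poissonPMF, mul_div_assoc]

lemma poissonPMF_mul_binomPMF_add (μ α : ℝ) (j b : ℕ) :
    poissonPMF μ (b + j) * binomPMF (b + j) α j =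
      poissonPMF (α * μ) j * poissonPMF ((1 - α) * μ) b := by
  have hfac : ((b + j).choose j : ℝ) * b ! * j ! = (b + j)! := by
    exact_mod_cast Nat.add_choose_mul_factorial_mul_factorial b j
  have hexp : Real.exp (-μ) = Real.exp (-(α * μ)) * Real.exp (-((1 - α) * μ)) := by
    rw [← Real.exp_add]
    ring_nf
  have hchoose : ((b + j).choose j : ℝ) ≠ 0 :=
    Nat.cast_ne_zero.2 (Nat.choose_pos (Nat.le_add_left j b)).ne'
  rw [poissonPMF, poissonPMF, poissonPMF, binomPMF, Nat.add_sub_cancel, hexp, ← hfac,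
    mul_pow, mul_pow, pow_add]
  field_simp

lemma summable_norm_poissonPMF_mul_binomPMF (μ α : ℝ) (j : ℕ) :
    Summable fun v => ‖poissonPMF μ v * binomPMF v α j‖ := by
  refine (summable_nat_add_iff j).1 (((summable_norm_poissonPMF ((1 - α) * μ)).mul_left
    ‖poissonPMF (α * μ) j‖).congr fun b => ?_)
  rw [poissonPMF_mul_binomPMF_add, norm_mul]

lemma thin_poissonPMF (μ α : ℝ) : thin α (poissonPMF μ) = poissonPMF (α * μ) := by
  funext j
  rw [thin, ← (summable_norm_poissonPMF_mul_binomPMF μ α j).of_norm.sum_add_tsum_nat_add j,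
    sum_eq_zero fun v hv => by rw [binomPMF_eq_zero_of_lt α (mem_range.1 hv), mul_zero],
    zero_add]
  simp_rw [poissonPMF_mul_binomPMF_add]
  rw [tsum_mul_left, (hasSum_poissonPMF _).tsum_eq, mul_one]

end BinomialThinning

theorem one_step_update_of_binomial_poisson_convolution_general
    (α : ℝ) (y : ℕ) (μ lam : ℝ) (h : ℕ) (k : ℕ) :
    ∑' n : ℕ, convBinPoisPMF y (α ^ h) μ n * stepPMF α lam n k =
      convBinPoisPMF y (α ^ (h + 1)) (α * μ + lam) k := by
  open BinomialThinning in
  simp_rw [stepPMF_eq_conv, convBinPoisPMF_eq_conv]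
  have hX : ∀ a, Summable fun i => ‖binomPMF y (α ^ h) i * binomPMF i α a‖ :=
    summable_norm_binomPMF_mul_binomPMF y (α ^ h) α
  have hP : ∀ b, Summable fun j => ‖poissonPMF μ j * binomPMF j α b‖ :=
    summable_norm_poissonPMF_mul_binomPMF μ α
  rw [tsum_mul_conv_binomPMF (summable_conv_mul_binomPMF hX hP), thin_conv hX hP,
    thin_binomPMF, thin_poissonPMF, conv_assoc, poissonPMF_conv, pow_succ]

/-- One-step update of the h-step law (induction step of Proposition 1): if X is
distributed as the convolution of Binomial(y, α^h) and Poisson(μ), and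
Y = (α ∘ X) + Z with a Binomial(X, α) thinning and an independent Poisson(λ)
innovation Z, then Y is distributed as the convolution of Binomial(y, α^{h+1})
and Poisson(αμ + λ). -/
theorem one_step_update_of_binomial_poisson_convolution
    (α : ℝ) (hα : α ∈ Set.Icc (0 : ℝ) 1) (y : ℕ) (μ lam : ℝ)
    (hμ : 0 < μ) (hlam : 0 < lam) (h : ℕ) (hh : 1 ≤ h) (k : ℕ) :
    ∑' n : ℕ, convBinPoisPMF y (α ^ h) μ n * stepPMF α lam n k =
      convBinPoisPMF y (α ^ (h + 1)) (α * μ + lam) k :=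
  one_step_update_of_binomial_poisson_convolution_general α y μ lam h k
end
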